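/- Let q be a prime power, χ₁ a multiplicative character of F_q, χ₂ a nontrivial multiplicative character of F_q with χ₁ ≠ χ₂, and u,v ∈ F_q^*. Then |Σ_{a ∈ F_q^*} χ₁χ₂^{-1}(a)·χ₂(ua² + v)| ≤ 2√q, where nontrivial characters are extended by χ(0)=0. -/

import Mathlib

/-!
Put `χ = χ₁ χ₂⁻¹`; since `χ 0 = 0` the sum may run over all of `F`. If `χ (-1) ≠ 1`, the
substitution `a ↦ -a` shows that the sum vanishes. Otherwise `χ = ξ²` for a character `ξ`, and the
sum is `∑ₐ g (a²)` with `g s = ξ s χ₂ (u s + v)`. Counting square roots with the quadratic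
character `η` turns it into `∑ₛ g s + ∑ₛ η s g s` (into `∑ₛ g s` in characteristic 2), and
the substitution `s = -(v/u) t` makes each of these a Jacobi sum `J(ψ, χ₂)` times a root of
unity. Finally `|J(ψ, χ₂)| ≤ √q`: it equals `√q` when `ψ`, `χ₂`, `ψχ₂` are all nontrivial and has
absolute value at most 1 otherwise.
-/

open Finset

namespace MulChar

lemma norm_apply_le_one {R : Type*} [CommMonoid R] [Finite Rˣ] (χ : MulChar R ℂ) (a : R) :
    ‖χ a‖ ≤ 1 := by
  cases nonempty_fintype Rˣ
  by_cases ha : IsUnit a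
  · refine (Complex.norm_eq_one_of_pow_eq_one (n := Nat.card Rˣ) ?_ Nat.card_pos.ne').le
    rw [← ha.unit_spec, ← map_pow, ← Units.val_pow_eq_pow_val, pow_card_eq_one', Units.val_one,
      map_one]
  · simp only [map_nonunit χ ha, norm_zero, zero_le_one]

lemma sum_mul_eq_zero_of_apply_neg_one_ne_one {R R' : Type*} [CommRing R] [Fintype R]
    [CommRing R'] [IsDomain R'] {χ : MulChar R R'} (hχ : χ (-1) ≠ 1) {f : R → R'}
    (hf : ∀ a, f (-a) = f a) : ∑ a, χ a * f a = 0 := by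
  have hneg : χ (-1) * ∑ a, χ a * f a = ∑ a, χ a * f a := by
    rw [mul_sum]
    refine Fintype.sum_equiv (Equiv.neg R) _ _ fun a => ?_
    rw [Equiv.neg_apply, hf, neg_eq_neg_one_mul a, map_mul, mul_assoc]
  exact (mul_left_eq_self₀.mp hneg).resolve_left hχ

variable {F : Type*} [Field F] [Fintype F]

lemma isSquare_of_apply_neg_one_eq_one {χ : MulChar F ℂ} (hχ : χ (-1) = 1) : IsSquare χ := by
  by_cases hF : ringChar F = 2
  · have hcard := FiniteField.even_card_of_char_two hF
    have hpow : χ ^ (Fintype.card F - 1) = 1 :=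
      orderOf_dvd_iff_pow_eq_one.mp (orderOf_dvd_card_sub_one F χ)
    refine ⟨χ ^ (Fintype.card F / 2), ?_⟩
    rw [← pow_add, show Fintype.card F / 2 + Fintype.card F / 2 = Fintype.card F - 1 + 1 by
      have := Fintype.card_pos (α := F); omega, pow_succ, hpow, one_mul]
  · obtain ⟨e⟩ := mulEquiv_units F ℂ
    have hpow : χ ^ (Fintype.card F / 2) = 1 := by
      ext a
      rw [pow_apply_coe, one_apply_coe, ← map_pow]
      rcases FiniteField.pow_dichotomy hF a.ne_zero with h | h <;> simp [h, hχ]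
    have : IsSquare (e χ) := by
      rw [FiniteField.unit_isSquare_iff hF, ← map_pow, hpow, map_one]
    simpa using this.map e.symm

end MulChar

section CharacterSums

variable {F : Type*} [Field F] [Fintype F]

lemma starRingEnd_jacobiSum (χ ψ : MulChar F ℂ) :
    starRingEnd ℂ (jacobiSum χ ψ) = jacobiSum χ⁻¹ ψ⁻¹ := by
  simp only [jacobiSum, map_sum, map_mul, starRingEnd_apply, MulChar.star_apply']

lemma norm_jacobiSum_le (χ : MulChar F ℂ) {ψ : MulChar F ℂ} (hψ : ψ ≠ 1) :
    ‖jacobiSum χ ψ‖ ≤ √(Fintype.card F) := by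
  have one_le : (1 : ℝ) ≤ √(Fintype.card F) :=
    Real.one_le_sqrt.mpr (by exact_mod_cast Fintype.card_pos)
  rcases eq_or_ne χ 1 with rfl | hχ
  · simpa [jacobiSum_one_nontrivial hψ] using one_le
  rcases eq_or_ne (χ * ψ) 1 with hχψ | hχψ
  · obtain rfl : χ = ψ⁻¹ := eq_inv_of_mul_eq_one_left hχψ
    rw [jacobiSum_comm, jacobiSum_nontrivial_inv hψ, norm_neg]
    exact (MulChar.norm_apply_le_one _ _).trans one_le
  · have hchar : ringChar ℂ ≠ ringChar F := by
      rw [ringChar.eq_zero]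
      exact (CharP.char_ne_zero_of_finite F (ringChar F)).symm
    have hsq : (‖jacobiSum χ ψ‖ : ℂ) ^ 2 = Fintype.card F := by
      rw [← Complex.mul_conj', starRingEnd_jacobiSum, jacobiSum_mul_jacobiSum_inv hchar hχ hψ hχψ]
    rw [Real.le_sqrt (norm_nonneg _) (Nat.cast_nonneg _)]
    exact (show ‖jacobiSum χ ψ‖ ^ 2 = Fintype.card F by exact_mod_cast hsq).le

lemma sum_mulChar_mul_mulChar_affine_eq_mul_jacobiSum {R : Type*} [CommRing R]
    (ψ χ : MulChar F R) {u v : F} (hu : u ≠ 0) (hv : v ≠ 0) :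
    ∑ s, ψ s * χ (u * s + v) = ψ (-(v / u)) * χ v * jacobiSum ψ χ := by
  have hc : -(v / u) ≠ 0 := neg_ne_zero.mpr (div_ne_zero hv hu)
  rw [jacobiSum, mul_sum, ← Equiv.sum_comp (Equiv.mulLeft₀ _ hc)]
  refine sum_congr rfl fun t _ => ?_
  rw [Equiv.mulLeft₀_apply, show u * (-(v / u) * t) + v = v * (1 - t) by field_simp; ring,
    map_mul, map_mul]
  ring

lemma norm_sum_mulChar_mul_mulChar_affine_le (ψ : MulChar F ℂ) {χ : MulChar F ℂ} (hχ : χ ≠ 1)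
    {u v : F} (hu : u ≠ 0) (hv : v ≠ 0) :
    ‖∑ s, ψ s * χ (u * s + v)‖ ≤ √(Fintype.card F) := by
  rw [sum_mulChar_mul_mulChar_affine_eq_mul_jacobiSum ψ χ hu hv, norm_mul, norm_mul]
  calc ‖ψ (-(v / u))‖ * ‖χ v‖ * ‖jacobiSum ψ χ‖ ≤ 1 * 1 * √(Fintype.card F) := by
        gcongr
        exacts [ψ.norm_apply_le_one _, χ.norm_apply_le_one _, norm_jacobiSum_le ψ hχ]
    _ = √(Fintype.card F) := by ring

lemma sum_comp_sq_of_ringChar_eq_two {M : Type*} [AddCommMonoid M] (hF : ringChar F = 2)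
    (g : F → M) : ∑ a, g (a ^ 2) = ∑ s, g s := by
  refine (Finite.surjective_iff_bijective.mp fun s => ?_).sum_comp g
  obtain ⟨r, hr⟩ := FiniteField.isSquare_of_char_two hF s
  exact ⟨r, by rw [hr, sq]⟩

lemma sum_comp_sq_eq_sum_quadraticChar_zsmul [DecidableEq F] {M : Type*} [AddCommGroup M]
    (hF : ringChar F ≠ 2) (g : F → M) : ∑ a, g (a ^ 2) = ∑ s, (quadraticChar F s + 1) • g s := by
  rw [← sum_fiberwise univ (· ^ 2)]
  refine sum_congr rfl fun s _ => ?_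
  rw [sum_congr rfl fun a ha => by rw [(mem_filter.mp ha).2], sum_const,
    ← quadraticChar_card_sqrts hF s, natCast_zsmul]
  congr 2
  ext a
  simp

lemma norm_sum_mulChar_sq_mul_mulChar_affine_sq_le (ξ : MulChar F ℂ) {χ : MulChar F ℂ}
    (hχ : χ ≠ 1) {u v : F} (hu : u ≠ 0) (hv : v ≠ 0) :
    ‖∑ a, ξ (a ^ 2) * χ (u * a ^ 2 + v)‖ ≤ 2 * √(Fintype.card F) := by
  have hlin (ψ : MulChar F ℂ) := norm_sum_mulChar_mul_mulChar_affine_le ψ hχ hu hv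
  by_cases hF : ringChar F = 2
  · rw [sum_comp_sq_of_ringChar_eq_two hF fun s => ξ s * χ (u * s + v)]
    linarith [hlin ξ, Real.sqrt_nonneg (Fintype.card F)]
  classical
  set η := (quadraticChar F).ringHomComp (Int.castRingHom ℂ)
  have hsplit : ∑ a, ξ (a ^ 2) * χ (u * a ^ 2 + v) =
      ∑ s, ξ s * χ (u * s + v) + ∑ s, (η * ξ) s * χ (u * s + v) := by
    rw [sum_comp_sq_eq_sum_quadraticChar_zsmul hF fun s => ξ s * χ (u * s + v), ← sum_add_distrib]
    refine sum_congr rfl fun s _ => ?_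
    simp only [zsmul_eq_mul, MulChar.mul_apply, η, MulChar.ringHomComp_apply, Int.cast_add,
      Int.cast_one, eq_intCast]
    ring
  rw [hsplit, two_mul]
  exact (norm_add_le _ _).trans (add_le_add (hlin ξ) (hlin (η * ξ)))

end CharacterSums

theorem stmt_17_general (F : Type*) [Field F] [Fintype F] [DecidableEq F]
    (χ₁ χ₂ : MulChar F ℂ) (h₂ : χ₂ ≠ 1)
    (u v : F) (hu : u ≠ 0) (hv : v ≠ 0) :
    ‖∑ a ∈ Finset.univ \ {0}, (χ₁ * χ₂⁻¹) a * χ₂ (u * a ^ 2 + v)‖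
      ≤ 2 * Real.sqrt (Fintype.card F) := by
  set χ := χ₁ * χ₂⁻¹
  rw [sum_subset (subset_univ _) fun a _ ha => by
    obtain rfl : a = 0 := by simpa using ha
    rw [χ.map_zero, zero_mul]]
  by_cases hχ : χ (-1) = 1
  · obtain ⟨ξ, hξ⟩ := MulChar.isSquare_of_apply_neg_one_eq_one hχ
    have hχξ (a : F) : χ a = ξ (a ^ 2) := by rw [hξ, MulChar.mul_apply, ← map_mul, sq]
    simp_rw [hχξ]
    exact norm_sum_mulChar_sq_mul_mulChar_affine_sq_le ξ h₂ hu hv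
  · rw [MulChar.sum_mul_eq_zero_of_apply_neg_one_ne_one hχ fun a => by rw [neg_sq], norm_zero]
    positivity

/-- Weil-type bound: for a multiplicative character `χ₁`, a nontrivial
multiplicative character `χ₂ ≠ χ₁`, and nonzero `u, v`,
`|∑_{a ∈ F*} χ₁χ₂⁻¹(a) χ₂(ua² + v)| ≤ 2√q`. -/
theorem stmt_17 (F : Type*) [Field F] [Fintype F] [DecidableEq F]
    (χ₁ χ₂ : MulChar F ℂ) (h₂ : χ₂ ≠ 1) (h₁₂ : χ₁ ≠ χ₂)
    (u v : F) (hu : u ≠ 0) (hv : v ≠ 0) :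
    ‖∑ a ∈ Finset.univ \ {0}, (χ₁ * χ₂⁻¹) a * χ₂ (u * a ^ 2 + v)‖
      ≤ 2 * Real.sqrt (Fintype.card F) :=
  stmt_17_general F χ₁ χ₂ h₂ u v hu hv
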